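/- An amorphic association scheme with at least three classes is symmetric: let d ≥ 3 and let A_0, A_1, …, A_d form an association scheme such that for EVERY partition Λ of {0,1,…,d} having {0} as a block (not assumed admissible), the block-sum matrices B_C = ∑_{i∈C} A_i, indexed by the blocks C of Λ, again form an association scheme. Then A_i = A_iᵀ for all i. -/

import Mathlib

open Matrix BigOperators

/-- An association scheme on `n` vertices, encoded as a family of `n × n`
real `0/1`-matrices indexed by `ι`: `e` is the index of the diagonal (identity)
relation and `σ` is the pairing sending each relation to its transpose.
All relations are nonempty, the identity relation is the identity matrix,
the relations partition `X × X` (the matrices sum to the all-ones matrix `J`),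
the family is closed under transposition, and products of the matrices are
nonnegative-integer linear combinations of the matrices. -/
def IsAssocScheme {ι : Type} [Fintype ι] (n : ℕ)
    (A : ι → Matrix (Fin n) (Fin n) ℝ) (e : ι) (σ : ι → ι) : Prop :=
  (∀ i, A i ≠ 0) ∧
  (∀ i x y, A i x y = 0 ∨ A i x y = 1) ∧
  A e = 1 ∧
  (∑ i, A i) = Matrix.of (fun _ _ => (1 : ℝ)) ∧
  (∀ i, (A i)ᵀ = A (σ i)) ∧
  (∀ i j, ∃ p : ι → ℕ, A i * A j = ∑ k, (p k : ℝ) • A k)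

/-- `Λ` is a partition of the index set `ι`: its blocks are nonempty and every
index lies in exactly one block. -/
def IsPartition {ι : Type} [Fintype ι] [DecidableEq ι]
    (Λ : Finset (Finset ι)) : Prop :=
  (∀ C ∈ Λ, C.Nonempty) ∧ ∀ i : ι, ∃! C, C ∈ Λ ∧ i ∈ C

/-- A partition `Λ` of the index set is admissible (for a scheme with diagonal
index `e` and transpose pairing `σ`) if `{e}` is a block of `Λ` and the image
of every block under the pairing `σ` is again a block. -/
def Admissible {ι : Type} [Fintype ι] [DecidableEq ι]
    (e : ι) (σ : ι → ι) (Λ : Finset (Finset ι)) : Prop :=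
  ({e} : Finset ι) ∈ Λ ∧ ∀ C ∈ Λ, C.image σ ∈ Λ

/-- The partition `Λ` gives rise to a fusion scheme: the block sums
`B_C = ∑_{i ∈ C} A_i`, indexed by the blocks of `Λ`, again form an
association scheme, with diagonal block `{e}`. -/
def GivesFusion {ι : Type} [Fintype ι] [DecidableEq ι] (n : ℕ)
    (A : ι → Matrix (Fin n) (Fin n) ℝ) (e : ι) (Λ : Finset (Finset ι)) : Prop :=
  ∃ (E : {C // C ∈ Λ}) (σ' : {C // C ∈ Λ} → {C // C ∈ Λ}),
    (E : Finset ι) = {e} ∧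
    IsAssocScheme n (fun C : {C // C ∈ Λ} => ∑ i ∈ (C : Finset ι), A i) E σ'

/-- The scheme is amorphous: every admissible partition of the index set gives
rise to a fusion scheme. -/
def Amorphous {ι : Type} [Fintype ι] [DecidableEq ι] (n : ℕ)
    (A : ι → Matrix (Fin n) (Fin n) ℝ) (e : ι) (σ : ι → ι) : Prop :=
  ∀ Λ : Finset (Finset ι), IsPartition Λ → Admissible e σ Λ → GivesFusion n A e Λ


open Finset

/-!
Suppose `A i` is not symmetric, so `σ i ∉ {0, i}`. Fuse all relations other than `0` and `i`
into one block `C`, which has at least two members since `d ≥ 3`. In the fusion scheme the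
transpose of the block `{i}` is a block whose sum is `A (σ i)`; since distinct relations have
disjoint nonempty supports, a block sum equal to a single relation comes from a singleton block.
So `{σ i}` would be a block, which is impossible.
-/

namespace IsAssocScheme

variable {ι : Type} [Fintype ι] {n : ℕ} {A : ι → Matrix (Fin n) (Fin n) ℝ} {e : ι}
  {σ : ι → ι}

theorem apply_diag (hA : IsAssocScheme n A e σ) : A e = 1 := hA.2.2.1

theorem transpose_eq (hA : IsAssocScheme n A e σ) (i : ι) : (A i)ᵀ = A (σ i) :=
  hA.2.2.2.2.1 i

theorem nonneg (hA : IsAssocScheme n A e σ) (i : ι) (x y : Fin n) : 0 ≤ A i x y := by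
  rcases hA.2.1 i x y with h | h <;> simp [h]

theorem sum_apply_eq_one (hA : IsAssocScheme n A e σ) (x y : Fin n) : ∑ i, A i x y = 1 := by
  simpa [Matrix.sum_apply] using congrFun (congrFun hA.2.2.2.1 x) y

theorem exists_apply_eq_one (hA : IsAssocScheme n A e σ) (i : ι) : ∃ x y, A i x y = 1 := by
  by_contra! h
  exact hA.1 i <| Matrix.ext fun x y => (hA.2.1 i x y).resolve_right (h x y)

variable [DecidableEq ι]

theorem eq_singleton_of_sum_eq (hA : IsAssocScheme n A e σ) {S : Finset ι} {k : ι}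
    (hS : ∑ j ∈ S, A j = A k) : S = {k} := by
  have hmem : ∀ j ∈ S, j = k := by
    intro j hj
    by_contra hjk
    obtain ⟨x, y, hj1⟩ := hA.exists_apply_eq_one j
    have hk1 : 1 ≤ A k x y := by
      calc 1 = A j x y := hj1.symm
        _ ≤ ∑ l ∈ S, A l x y := single_le_sum (fun l _ => hA.nonneg l x y) hj
        _ = A k x y := by rw [← Matrix.sum_apply, hS]
    have hpair : A j x y + A k x y ≤ 1 := by
      calc A j x y + A k x y = ∑ l ∈ {j, k}, A l x y :=
            (sum_pair (f := fun l => A l x y) hjk).symm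
        _ ≤ ∑ l, A l x y :=
          sum_le_sum_of_subset_of_nonneg (subset_univ _) fun l _ _ => hA.nonneg l x y
        _ = 1 := hA.sum_apply_eq_one x y
    linarith
  obtain ⟨j, hj⟩ : S.Nonempty := by
    rw [nonempty_iff_ne_empty]
    rintro rfl
    exact hA.1 k (by simpa using hS.symm)
  obtain rfl := hmem j hj
  exact eq_singleton_iff_unique_mem.mpr ⟨hj, hmem⟩

theorem injective (hA : IsAssocScheme n A e σ) : Function.Injective A := fun j k h =>
  singleton_inj.mp (hA.eq_singleton_of_sum_eq (by simpa using h))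

theorem pairing_ne (hA : IsAssocScheme n A e σ) {i : ι} (hi : i ≠ e) : σ i ≠ e := by
  intro h
  apply hi
  apply hA.injective
  rw [hA.apply_diag, ← transpose_transpose (A i), hA.transpose_eq i, h, hA.apply_diag,
    transpose_one]

theorem singleton_pairing_mem_of_givesFusion (hA : IsAssocScheme n A e σ)
    {Λ : Finset (Finset ι)} (hΛ : GivesFusion n A e Λ) {i : ι} (hi : {i} ∈ Λ) :
    {σ i} ∈ Λ := by
  obtain ⟨-, σ', -, -, -, -, -, hT', -⟩ := hΛ
  have hsum : ∑ j ∈ (σ' ⟨{i}, hi⟩ : Finset ι), A j = A (σ i) := by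
    have h := hT' ⟨{i}, hi⟩
    simp only [sum_singleton] at h
    rw [← h, hA.transpose_eq i]
  rw [← hA.eq_singleton_of_sum_eq hsum]
  exact (σ' ⟨{i}, hi⟩).2

end IsAssocScheme

theorem isPartition_pair_compl {ι : Type} [Fintype ι] [DecidableEq ι] {a b : ι}
    (hC : (univ \ {a, b}).Nonempty) :
    IsPartition ({{a}, {b}, univ \ {a, b}} : Finset (Finset ι)) := by
  refine ⟨?_, fun j => ?_⟩
  · simp only [mem_insert, mem_singleton]
    rintro C (rfl | rfl | rfl) <;> simp [hC]
  · by_cases hja : j = a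
    · exact ⟨{a}, by simp [hja], by aesop⟩
    by_cases hjb : j = b
    · exact ⟨{b}, by simp [hjb], by aesop⟩
    exact ⟨univ \ {a, b}, by simp [hja, hjb], by aesop⟩

/-- An amorphic association scheme with at least three classes is symmetric:
if every partition of the index set having `{0}` as a block (not assumed
admissible) yields block-sum matrices forming an association scheme, then
every relation is symmetric. -/
theorem amorphic_three_classes_is_symmetric
    (d : ℕ) (hd : 3 ≤ d) (n : ℕ)
    (A : Fin (d + 1) → Matrix (Fin n) (Fin n) ℝ) (σ : Fin (d + 1) → Fin (d + 1))
    (hA : IsAssocScheme n A 0 σ)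
    (hamorphic : ∀ Λ : Finset (Finset (Fin (d + 1))), IsPartition Λ →
      ({(0 : Fin (d + 1))} : Finset (Fin (d + 1))) ∈ Λ → GivesFusion n A 0 Λ) :
    ∀ i, A i = (A i)ᵀ := by
  intro i
  by_cases hi : i = 0
  · rw [hi, hA.apply_diag, transpose_one]
  obtain hσ | hσ := eq_or_ne (σ i) i
  · rw [hA.transpose_eq i, hσ]
  have hC : 2 ≤ #(univ \ {0, i}) := by
    rw [card_sdiff_of_subset (subset_univ _), card_univ, Fintype.card_fin, card_pair (Ne.symm hi)]
    omega
  have hΛ : GivesFusion n A 0 {{0}, {i}, univ \ {0, i}} :=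
    hamorphic _ (isPartition_pair_compl (card_pos.mp (by omega))) (by simp)
  have hσΛ := hA.singleton_pairing_mem_of_givesFusion hΛ (i := i) (by simp)
  simp only [mem_insert, mem_singleton, singleton_inj] at hσΛ
  rcases hσΛ with h0 | hii | hcompl
  · exact absurd h0 (hA.pairing_ne hi)
  · exact absurd hii hσ
  · simp [← hcompl] at hC
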